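/- Let F and G be symmetric distributions with unique medians m_F and m_G and quantile functions continuous at 1/2. Then Shift_+^{AVM}(F,G) > 0 if and only if m_F > m_G. -/
import Mathlib


open MeasureTheory
open scoped ENNReal

/-- `Shift₊^AVM` component, as a lower Lebesgue integral. -/
noncomputable def avmShiftPlusL (qF qG : ℝ → ℝ) : ℝ≥0∞ :=
  ∫⁻ α in Set.Ioo (0:ℝ) 1,
    ENNReal.ofReal (max (min (qF ((1 + α) / 2) - qG ((1 + α) / 2))
                             (qF ((1 - α) / 2) - qG ((1 - α) / 2))) 0)

lemma qmp_affine (a b : ℝ) (ha : a ≠ 0) :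
    Measure.QuasiMeasurePreserving (fun x => a * x + b) (volume : Measure ℝ) volume := by
  constructor
  · fun_prop
  · have : (fun x => a * x + b) = (· + b) ∘ (a * ·) := by funext x; simp
    rw [this, ← Measure.map_map (by fun_prop) (by fun_prop),
      Real.map_volume_mul_left ha, Measure.map_smul, map_add_right_eq_self]
    exact Measure.AbsolutelyContinuous.mk fun s _ hs => by simp [hs]

lemma ae_sym_transfer (q : ℝ → ℝ) (m : ℝ)
    (hsym : ∀ᵐ γ ∂(volume.restrict (Set.Ioo (0:ℝ) 1)), q γ = 2 * m - q (1 - γ)) :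
    ∀ᵐ α ∂(volume.restrict (Set.Ioo (0:ℝ) 1)),
      q ((1 - α) / 2) = 2 * m - q ((1 + α) / 2) := by
  have h1 : ∀ᵐ γ ∂(volume : Measure ℝ), γ ∈ Set.Ioo (0:ℝ) 1 → q γ = 2 * m - q (1 - γ) :=
    (ae_restrict_iff' measurableSet_Ioo).mp hsym
  have hg : Measure.QuasiMeasurePreserving (fun α : ℝ => (1 - α) / 2)
      (volume : Measure ℝ) volume := by
    have := qmp_affine (-(1/2)) (1/2) (by norm_num)
    convert this using 2 with α
    ring
  have h2 : ∀ᵐ α ∂(volume : Measure ℝ),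
      (1 - α) / 2 ∈ Set.Ioo (0:ℝ) 1 → q ((1 - α) / 2) = 2 * m - q (1 - (1 - α) / 2) :=
    hg.tendsto_ae.eventually h1
  rw [ae_restrict_iff' measurableSet_Ioo]
  filter_upwards [h2] with α hα hmem
  have hmem' : (1 - α) / 2 ∈ Set.Ioo (0:ℝ) 1 := by
    constructor <;> [nlinarith [hmem.1, hmem.2]; nlinarith [hmem.1, hmem.2]]
  have := hα hmem'
  have harg : 1 - (1 - α) / 2 = (1 + α) / 2 := by ring
  rwa [harg] at this

/-- For symmetric distributions with unique medians `m_F`, `m_G` (quantile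
functions continuous at `1/2`, with `F⁻¹(1/2) = m_F`, `G⁻¹(1/2) = m_G`),
the plus shift component of the AVM is strictly positive iff `m_F > m_G`. -/
theorem shift_symmetric_pos_iff (qF qG : ℝ → ℝ) (mF mG : ℝ)
    (hF : MonotoneOn qF (Set.Ioo 0 1)) (hG : MonotoneOn qG (Set.Ioo 0 1))
    (hFsym : ∀ᵐ γ ∂(volume.restrict (Set.Ioo (0:ℝ) 1)),
      qF γ = 2 * mF - qF (1 - γ))
    (hGsym : ∀ᵐ γ ∂(volume.restrict (Set.Ioo (0:ℝ) 1)),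
      qG γ = 2 * mG - qG (1 - γ))
    (hFc : ContinuousWithinAt qF (Set.Ioo 0 1) (1 / 2))
    (hGc : ContinuousWithinAt qG (Set.Ioo 0 1) (1 / 2))
    (hFm : qF (1 / 2) = mF) (hGm : qG (1 / 2) = mG) :
    0 < avmShiftPlusL qF qG ↔ mG < mF := by
  constructor
  · intro hpos
    by_contra hle
    push_neg at hle  -- hle : mF ≤ mG
    have hzero : avmShiftPlusL qF qG = 0 := by
      unfold avmShiftPlusL
      rw [← lintegral_zero (μ := volume.restrict (Set.Ioo (0:ℝ) 1))]
      apply lintegral_congr_ae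
      filter_upwards [ae_sym_transfer qF mF hFsym, ae_sym_transfer qG mG hGsym] with α h1 h2
      have hminle : min (qF ((1 + α) / 2) - qG ((1 + α) / 2))
          (qF ((1 - α) / 2) - qG ((1 - α) / 2)) ≤ 0 := by
        have ha := min_le_left (qF ((1 + α) / 2) - qG ((1 + α) / 2))
          (qF ((1 - α) / 2) - qG ((1 - α) / 2))
        have hb := min_le_right (qF ((1 + α) / 2) - qG ((1 + α) / 2))
          (qF ((1 - α) / 2) - qG ((1 - α) / 2))
        linarith [h1, h2]
      rw [max_eq_right hminle, ENNReal.ofReal_zero]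
    rw [hzero] at hpos
    exact lt_irrefl 0 hpos
  · intro hd
    set d : ℝ := mF - mG with hddef
    have hd0 : 0 < d := by simp [hddef]; linarith
    rw [Metric.continuousWithinAt_iff] at hFc hGc
    obtain ⟨δF, hδF0, hδF⟩ := hFc (d / 4) (by linarith)
    obtain ⟨δG, hδG0, hδG⟩ := hGc (d / 4) (by linarith)
    set δ : ℝ := min (min δF δG) (1 / 2) with hδdef
    have hδ0 : 0 < δ := lt_min (lt_min hδF0 hδG0) (by norm_num)
    have hδhalf : δ ≤ 1 / 2 := min_le_right _ _
    have key : ∀ α ∈ Set.Ioo (0:ℝ) δ,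
        ENNReal.ofReal (d / 2) ≤
        ENNReal.ofReal (max (min (qF ((1 + α) / 2) - qG ((1 + α) / 2))
                             (qF ((1 - α) / 2) - qG ((1 - α) / 2))) 0) := by
      intro α hα
      obtain ⟨hα0, hαδ⟩ := hα
      have hα1 : α < 1 / 2 := lt_of_lt_of_le hαδ hδhalf
      have hmemp : (1 + α) / 2 ∈ Set.Ioo (0:ℝ) 1 := by constructor <;> nlinarith
      have hmemm : (1 - α) / 2 ∈ Set.Ioo (0:ℝ) 1 := by constructor <;> nlinarith
      have hdistp : dist ((1 + α) / 2) (1 / 2 : ℝ) < min δF δG := by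
        rw [Real.dist_eq]
        have : |(1 + α) / 2 - 1 / 2| = α / 2 := by rw [abs_of_nonneg (by linarith)]; ring
        rw [this]
        calc α / 2 < δ := by linarith
        _ ≤ min δF δG := min_le_left _ _
      have hdistm : dist ((1 - α) / 2) (1 / 2 : ℝ) < min δF δG := by
        rw [Real.dist_eq]
        have : |(1 - α) / 2 - 1 / 2| = α / 2 := by
          rw [show (1 - α) / 2 - 1 / 2 = -(α / 2) by ring, abs_neg,
            abs_of_nonneg (by linarith)]
        rw [this]
        calc α / 2 < δ := by linarith
        _ ≤ min δF δG := min_le_left _ _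
      have hFp := hδF hmemp (lt_of_lt_of_le hdistp (min_le_left _ _))
      have hFm' := hδF hmemm (lt_of_lt_of_le hdistm (min_le_left _ _))
      have hGp := hδG hmemp (lt_of_lt_of_le hdistp (min_le_right _ _))
      have hGm' := hδG hmemm (lt_of_lt_of_le hdistm (min_le_right _ _))
      rw [Real.dist_eq, hFm] at hFp hFm'
      rw [Real.dist_eq, hGm] at hGp hGm'
      have hAp : d / 2 ≤ qF ((1 + α) / 2) - qG ((1 + α) / 2) := by
        have h1 := abs_lt.mp hFp
        have h2 := abs_lt.mp hGp
        simp only [hddef] at *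
        linarith [h1.1, h2.2]
      have hAm : d / 2 ≤ qF ((1 - α) / 2) - qG ((1 - α) / 2) := by
        have h1 := abs_lt.mp hFm'
        have h2 := abs_lt.mp hGm'
        simp only [hddef] at *
        linarith [h1.1, h2.2]
      apply ENNReal.ofReal_le_ofReal
      exact le_max_of_le_left (le_min hAp hAm)
    have hsub : Set.Ioo (0:ℝ) δ ⊆ Set.Ioo (0:ℝ) 1 := by
      apply Set.Ioo_subset_Ioo le_rfl; linarith
    calc (0:ℝ≥0∞) < ENNReal.ofReal (d / 2) * volume (Set.Ioo (0:ℝ) δ) := by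
          apply ENNReal.mul_pos
          · simp [ENNReal.ofReal_pos]; linarith
          · rw [Real.volume_Ioo]
            simp [ENNReal.ofReal_pos]; linarith
      _ = ∫⁻ _ in Set.Ioo (0:ℝ) δ, ENNReal.ofReal (d / 2) := by
          rw [setLIntegral_const, mul_comm]
      _ ≤ ∫⁻ α in Set.Ioo (0:ℝ) δ,
            ENNReal.ofReal (max (min (qF ((1 + α) / 2) - qG ((1 + α) / 2))
                             (qF ((1 - α) / 2) - qG ((1 - α) / 2))) 0) :=
          setLIntegral_mono' measurableSet_Ioo key
      _ ≤ avmShiftPlusL qF qG := lintegral_mono_set hsub
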